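/- Let E, V₁, V₂ be real normed vector spaces, let β : E → (E →L ℝ) assign to each point of E a continuous linear functional (a 1-form on E), let t ∈ ℝ, and let F₁ : E × V₁ → ℝ and F₂ : E × V₂ → ℝ be differentiable. Define the t-difference function Δ : E × V₁ × V₂ → ℝ by Δ(x, ξ₁, ξ₂) = F₂(x, ξ₂) − e^t · F₁(x, ξ₁), and let β̃ denote the pullback 1-form on E × V₁ × V₂ given by β̃(x,ξ₁,ξ₂)(u, v₁, v₂) = β(x)(u). Then a point (x, ξ₁, ξ₂) satisfies DΔ(x,ξ₁,ξ₂) = Δ(x,ξ₁,ξ₂) • β̃(x,ξ₁,ξ₂) (i.e., it is a β-critical point of Δ) if and only if the following three conditions hold: (1) the partial derivative of F₁ at (x, ξ₁) in the V₁-directions vanishes; (2) the partial derivative of F₂ at (x, ξ₂) in the V₂-directions vanishes; and (3) D_x F₂(x, ξ₂) − F₂(x, ξ₂) • β(x) = e^t • (D_x F₁(x, ξ₁) − F₁(x, ξ₁) • β(x)) as continuous linear functionals on E, where D_x denotes the partial derivative in the E-directions. -/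

import Mathlib

/-
Since `Δ` is built from `F₁` and `F₂` by precomposing with projections, its derivative splits
along `E × V₁ × V₂` into the three partial derivatives `D_x F₂ - e^t D_x F₁`, `-e^t D_ξ₁ F₁` and
`D_ξ₂ F₂`, while the pulled-back form `Δ • β̃` only has an `E`-component. Comparing components
gives the vanishing of both fiber derivatives and `D_x Δ = Δ • β x`, and the latter rearranges
to `d_β F₂ = e^t d_β F₁`.
-/

namespace ContinuousLinearMap

variable {R M₁ M₂ M : Type*} [Semiring R] [TopologicalSpace M₁] [AddCommMonoid M₁] [Module R M₁]
  [TopologicalSpace M₂] [AddCommMonoid M₂] [Module R M₂]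
  [TopologicalSpace M] [AddCommMonoid M] [Module R M] [ContinuousAdd M]

theorem coprod_inj_iff {f₁ g₁ : M₁ →L[R] M} {f₂ g₂ : M₂ →L[R] M} :
    f₁.coprod f₂ = g₁.coprod g₂ ↔ f₁ = g₁ ∧ f₂ = g₂ := by
  refine ⟨fun h => ⟨?_, ?_⟩, fun ⟨h₁, h₂⟩ => h₁ ▸ h₂ ▸ rfl⟩
  · simpa using congrArg (·.comp (inl R M₁ M₂)) h
  · simpa using congrArg (·.comp (inr R M₁ M₂)) h

theorem comp_fst_eq_coprod_zero (f : M₁ →L[R] M) : f.comp (fst R M₁ M₂) = f.coprod 0 := by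
  ext <;> simp

theorem coprod_zero_zero : (0 : M₁ →L[R] M).coprod (0 : M₂ →L[R] M) = 0 := by
  ext <;> simp

end ContinuousLinearMap

section PartialDerivatives

variable {𝕜 E V G : Type*} [NontriviallyNormedField 𝕜]
  [NormedAddCommGroup E] [NormedSpace 𝕜 E] [NormedAddCommGroup V] [NormedSpace 𝕜 V]
  [NormedAddCommGroup G] [NormedSpace 𝕜 G] {f : E × V → G} {x : E} {ξ : V}

theorem DifferentiableAt.fderiv_comp_prodMk_left (hf : DifferentiableAt 𝕜 f (x, ξ)) :
    fderiv 𝕜 (fun y => f (y, ξ)) x = (fderiv 𝕜 f (x, ξ)).comp (.inl 𝕜 E V) :=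
  (hf.hasFDerivAt.comp x (hasFDerivAt_prodMk_left x ξ)).fderiv

theorem DifferentiableAt.fderiv_comp_prodMk_right (hf : DifferentiableAt 𝕜 f (x, ξ)) :
    fderiv 𝕜 (fun v => f (x, v)) ξ = (fderiv 𝕜 f (x, ξ)).comp (.inr 𝕜 E V) :=
  (hf.hasFDerivAt.comp ξ (hasFDerivAt_prodMk_right x ξ)).fderiv

theorem DifferentiableAt.fderiv_eq_coprod_partial (hf : DifferentiableAt 𝕜 f (x, ξ)) :
    fderiv 𝕜 f (x, ξ) =
      (fderiv 𝕜 (fun y => f (y, ξ)) x).coprod (fderiv 𝕜 (fun v => f (x, v)) ξ) := by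
  rw [hf.fderiv_comp_prodMk_left, hf.fderiv_comp_prodMk_right,
    ContinuousLinearMap.coprod_comp_inl_inr]

end PartialDerivatives

theorem sub_smul_eq_sub_mul_smul_iff {R M : Type*} [CommRing R] [AddCommGroup M] [Module R M]
    (a₁ a₂ b : M) (c₁ c₂ e : R) :
    a₂ - e • a₁ = (c₂ - e * c₁) • b ↔ a₂ - c₂ • b = e • (a₁ - c₁ • b) := by
  rw [← sub_eq_zero, ← sub_eq_zero (a := a₂ - c₂ • b),
    show a₂ - e • a₁ - (c₂ - e * c₁) • b = a₂ - c₂ • b - e • (a₁ - c₁ • b) by module]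

/-- Let `E, V₁, V₂` be real normed vector spaces, `β` a 1-form on `E`,
`t ∈ ℝ`, and `F₁ : E × V₁ → ℝ`, `F₂ : E × V₂ → ℝ` differentiable.  Let
`Δ (x, ξ₁, ξ₂) = F₂ (x, ξ₂) − e^t · F₁ (x, ξ₁)` be the `t`-difference function and `β̃`
the pullback of `β` to `E × V₁ × V₂`.  Then `(x, ξ₁, ξ₂)` is a `β`-critical point of
`Δ` (i.e. `DΔ = Δ • β̃` there) iff the fiber derivatives of `F₁` at `(x, ξ₁)` and of
`F₂` at `(x, ξ₂)` vanish and
`D_x F₂(x,ξ₂) − F₂(x,ξ₂) • β x = e^t • (D_x F₁(x,ξ₁) − F₁(x,ξ₁) • β x)`. -/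
theorem stmt4 {E V₁ V₂ : Type} [NormedAddCommGroup E] [NormedSpace ℝ E]
    [NormedAddCommGroup V₁] [NormedSpace ℝ V₁]
    [NormedAddCommGroup V₂] [NormedSpace ℝ V₂]
    (β : E → (E →L[ℝ] ℝ)) (t : ℝ)
    (F₁ : E × V₁ → ℝ) (F₂ : E × V₂ → ℝ)
    (hF₁ : Differentiable ℝ F₁) (hF₂ : Differentiable ℝ F₂)
    (Δ : E × V₁ × V₂ → ℝ)
    (hΔ : ∀ p : E × V₁ × V₂, Δ p = F₂ (p.1, p.2.2) - Real.exp t * F₁ (p.1, p.2.1))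
    (x : E) (ξ₁ : V₁) (ξ₂ : V₂) :
    fderiv ℝ Δ (x, ξ₁, ξ₂)
        = Δ (x, ξ₁, ξ₂) • ((β x).comp (ContinuousLinearMap.fst ℝ E (V₁ × V₂))) ↔
      (fderiv ℝ (fun ξ : V₁ => F₁ (x, ξ)) ξ₁ = 0 ∧
       fderiv ℝ (fun ξ : V₂ => F₂ (x, ξ)) ξ₂ = 0 ∧
       fderiv ℝ (fun y : E => F₂ (y, ξ₂)) x - F₂ (x, ξ₂) • β x
         = Real.exp t • (fderiv ℝ (fun y : E => F₁ (y, ξ₁)) x - F₁ (x, ξ₁) • β x)) := by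
  obtain rfl : Δ = fun p => F₂ (p.1, p.2.2) - Real.exp t * F₁ (p.1, p.2.1) := funext hΔ
  set e := Real.exp t
  have hΔdiff : Differentiable ℝ fun p : E × V₁ × V₂ => F₂ (p.1, p.2.2) - e * F₁ (p.1, p.2.1) := by
    fun_prop
  have hfib : Differentiable ℝ fun ξ : V₁ × V₂ => F₂ (x, ξ.2) - e * F₁ (x, ξ.1) := by
    fun_prop
  rw [(hΔdiff _).fderiv_eq_coprod_partial, (hfib _).fderiv_eq_coprod_partial]
  have hx : fderiv ℝ (fun y => F₂ (y, ξ₂) - e * F₁ (y, ξ₁)) x =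
      fderiv ℝ (fun y => F₂ (y, ξ₂)) x - e • fderiv ℝ (fun y => F₁ (y, ξ₁)) x := by
    rw [fderiv_fun_sub (by fun_prop) (by fun_prop), fderiv_const_mul (by fun_prop)]
  have hξ₁ : fderiv ℝ (fun v => F₂ (x, ξ₂) - e * F₁ (x, v)) ξ₁ =
      -(e • fderiv ℝ (fun v => F₁ (x, v)) ξ₁) := by
    rw [fderiv_const_sub, fderiv_const_mul (by fun_prop)]
  have hξ₂ : fderiv ℝ (fun v => F₂ (x, v) - e * F₁ (x, ξ₁)) ξ₂ =
      fderiv ℝ (fun v => F₂ (x, v)) ξ₂ := fderiv_sub_const _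
  rw [hx, hξ₁, hξ₂, ← ContinuousLinearMap.smul_comp, ContinuousLinearMap.comp_fst_eq_coprod_zero,
    ← ContinuousLinearMap.coprod_zero_zero, ContinuousLinearMap.coprod_inj_iff,
    ContinuousLinearMap.coprod_inj_iff, neg_eq_zero, smul_eq_zero_iff_right (Real.exp_ne_zero t),
    sub_smul_eq_sub_mul_smul_iff, and_rotate]
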